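/- arXiv:1603.04893 — 2 statements merged into one kernel-verified Lean document; each statement's English description precedes it below -/
import Mathlib

section
/- Let γ be nondecreasing and submodular with γ(∅)=0. For any set T ⊆ V and any s ⊆ V with γ(s) ≠ 0, the quantity 1 - (γ(T ∪ s) - γ(T∖s))/γ(s) is at most the total curvature c = max_{j: γ({j})≠0} (1 - (γ(V) - γ(V∖{j}))/γ({j})); consequently each group curvature c_{k_i} satisfies c_{k_i} ≤ c. -/
/-! By submodularity, the marginal gain of `j` is smallest on top of `V \ {j}`. Adding the
elements of `s` to `T \ s` one at a time therefore gains at least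
`∑ j ∈ s, (γ V - γ (V \ {j}))`, and each term is at least `(1 - c) * γ {j}` by the choice
of `c`. Since `c ≤ 1`, subadditivity `γ s ≤ ∑ j ∈ s, γ {j}` turns this into
`(1 - c) * γ s ≤ γ (T ∪ s) - γ (T \ s)`. -/

open Finset

def IsSubmodular {V : Type*} [DecidableEq V] (γ : Finset V → ℝ) : Prop :=
  ∀ A B : Finset V, γ (A ∪ B) + γ (A ∩ B) ≤ γ A + γ B

theorem nonneg_of_monotone_of_map_empty {V : Type*} {γ : Finset V → ℝ} (hmono : Monotone γ)
    (h0 : γ ∅ = 0) (A : Finset V) : 0 ≤ γ A :=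
  h0 ▸ hmono (empty_subset A)

section SetFunction

variable {V : Type*} [DecidableEq V] {γ : Finset V → ℝ}

namespace IsSubmodular

theorem le_sum_singleton (hsub : IsSubmodular γ) (h0 : γ ∅ = 0) (u : Finset V) :
    γ u ≤ ∑ j ∈ u, γ {j} := by
  induction u using Finset.induction_on with
  | empty => simp [h0]
  | insert a u ha ih =>
    have hunion := hsub {a} u
    rw [singleton_union, singleton_inter_of_notMem ha, h0] at hunion
    rw [sum_insert ha]
    linarith

theorem marginal_antitone (hsub : IsSubmodular γ) {A B : Finset V} {j : V} (hAB : A ⊆ B)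
    (hj : j ∉ B) : γ (insert j B) - γ B ≤ γ (insert j A) - γ A := by
  have h := hsub (insert j A) B
  rw [insert_union, union_eq_right.2 hAB, insert_inter_of_notMem hj,
    inter_eq_left.2 hAB] at h
  linarith

variable [Fintype V]

theorem add_sum_marginal_univ_le (hsub : IsSubmodular γ) {A u : Finset V}
    (hAu : Disjoint A u) :
    γ A + ∑ j ∈ u, (γ univ - γ (univ \ {j})) ≤ γ (A ∪ u) := by
  induction u using Finset.induction_on with
  | empty => simp
  | insert a u ha ih =>
    have haAu : a ∉ A ∪ u := by
      simp only [mem_union, not_or]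
      exact ⟨disjoint_right.1 hAu (mem_insert_self a u), ha⟩
    have hgain : γ univ - γ (univ \ {a}) ≤ γ (insert a (A ∪ u)) - γ (A ∪ u) := by
      have hsubset : A ∪ u ⊆ univ \ {a} := fun x hx =>
        mem_sdiff.2 ⟨mem_univ x, fun hxa => haAu (mem_singleton.1 hxa ▸ hx)⟩
      have h := hsub.marginal_antitone hsubset
        (notMem_sdiff_of_mem_right (mem_singleton_self a))
      rwa [insert_sdiff_self_of_mem (mem_univ a)] at h
    rw [union_insert, sum_insert ha]
    linarith [ih (hAu.mono_right (subset_insert a u))]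

theorem mul_le_sub_sdiff_of_mul_le_marginal_univ (hsub : IsSubmodular γ) (h0 : γ ∅ = 0)
    {a : ℝ} (ha : 0 ≤ a) (hmarg : ∀ j, a * γ {j} ≤ γ univ - γ (univ \ {j})) (T s : Finset V) :
    a * γ s ≤ γ (T ∪ s) - γ (T \ s) := by
  have htel := hsub.add_sum_marginal_univ_le (sdiff_disjoint : Disjoint (T \ s) s)
  rw [sdiff_union_self_eq_union] at htel
  calc a * γ s ≤ a * ∑ j ∈ s, γ {j} :=
        mul_le_mul_of_nonneg_left (hsub.le_sum_singleton h0 s) ha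
    _ = ∑ j ∈ s, a * γ {j} := mul_sum _ _ _
    _ ≤ ∑ j ∈ s, (γ univ - γ (univ \ {j})) := sum_le_sum fun j _ => hmarg j
    _ ≤ γ (T ∪ s) - γ (T \ s) := by linarith

end IsSubmodular

theorem one_sub_mul_le_marginal_univ [Fintype V] (hmono : Monotone γ) (h0 : γ ∅ = 0) {c : ℝ}
    (hc : c ∈ upperBounds
      {r : ℝ | ∃ j : V, γ {j} ≠ 0 ∧ r = 1 - (γ univ - γ (univ \ {j})) / γ {j}})
    (j : V) : (1 - c) * γ {j} ≤ γ univ - γ (univ \ {j}) := by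
  have hmarg : 0 ≤ γ univ - γ (univ \ {j}) := sub_nonneg.2 (hmono (subset_univ _))
  rcases (nonneg_of_monotone_of_map_empty hmono h0 {j}).eq_or_lt with hj | hj
  · rwa [← hj, mul_zero]
  · have h := hc ⟨j, hj.ne', rfl⟩
    rwa [sub_le_comm, le_div_iff₀ hj] at h

end SetFunction

/-- For `γ` nondecreasing, submodular with `γ ∅ = 0`: for any `T` and any `s`
with `γ s ≠ 0`, the quantity `1 - (γ (T ∪ s) - γ (T \ s)) / γ s` is at most the
total curvature `c = max_{j : γ {j} ≠ 0} (1 - (γ V - γ (V \ {j})) / γ {j})`;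
consequently each group curvature satisfies `c_{k_i} ≤ c`. -/
theorem group_curvature_le_total_curvature {V : Type*} [Fintype V] [DecidableEq V]
    (γ : Finset V → ℝ)
    (hsub : ∀ A B : Finset V, γ (A ∪ B) + γ (A ∩ B) ≤ γ A + γ B)
    (hmono : ∀ A B : Finset V, A ⊆ B → γ A ≤ γ B)
    (h0 : γ ∅ = 0)
    (c : ℝ)
    (hc : IsGreatest {r : ℝ | ∃ j : V, γ {j} ≠ 0 ∧
      r = 1 - (γ Finset.univ - γ (Finset.univ \ {j})) / γ {j}} c)
    (T s : Finset V) (hs : γ s ≠ 0) :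
    1 - (γ (T ∪ s) - γ (T \ s)) / γ s ≤ c := by
  have hmono' : Monotone γ := fun A B h => hmono A B h
  have hnn := nonneg_of_monotone_of_map_empty hmono' h0
  have hc1 : c ≤ 1 := by
    obtain ⟨j, -, rfl⟩ := hc.1
    exact sub_le_self 1 (div_nonneg (sub_nonneg.2 (hmono' (subset_univ _))) (hnn _))
  have hgain := IsSubmodular.mul_le_sub_sdiff_of_mul_le_marginal_univ hsub h0
    (sub_nonneg.2 hc1) (one_sub_mul_le_marginal_univ hmono' h0 hc.2) T s
  rwa [sub_le_comm, le_div_iff₀ ((hnn s).lt_of_ne' hs)]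
end

section
/- In the database-assisted spectrum access game, the social utility function γ is submodular as a function of sequences of user-channel assignments: for any partial assignments A_k ⊆ A_l (assignments to the first k ≤ l users) and any additional assignment a_j of user j > l, the marginal decrease satisfies γ(A_k ⊕ a_j) - γ(A_k) ≥ γ(A_l ⊕ a_j) - γ(A_l). -/
/-! Adding user `j` to the active set `T` changes the social utility by `j`'s own private utility
minus the interference `j` newly causes to the users already in `T`. All interference weights are
nonnegative, so both the interference `j` suffers and the interference it causes grow with `T`:
the marginal value of `j` can only shrink as `T` grows. -/

open Finset

/-- Interference experienced by user `i` from the active users in `T`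
(in the database-assisted spectrum access game). -/
noncomputable def interference (N : ℕ) (P : Fin N → ℝ) (d : Fin N → Fin N → ℝ)
    (lam : ℝ) (Np : Fin N → Finset (Fin N)) (a : Fin N → ℕ)
    (T : Finset (Fin N)) (i : Fin N) : ℝ :=
  ∑ m ∈ Np i ∩ T, P m * d m i ^ (-lam) * (if a i = a m then 1 else 0)

/-- Private utility of user `i` when the set of active users is `T`. -/
noncomputable def privateUtility (N : ℕ) (P : Fin N → ℝ) (d : Fin N → Fin N → ℝ)
    (lam : ℝ) (Np : Fin N → Finset (Fin N)) (ω : Fin N → ℕ → ℝ) (a : Fin N → ℕ)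
    (T : Finset (Fin N)) (i : Fin N) : ℝ :=
  -(interference N P d lam Np a T i) - ω i (a i)

/-- Social utility when the set of active users is `T`: the sum of the private
utilities of active users, with all terms involving inactive users removed. -/
noncomputable def socialUtility (N : ℕ) (P : Fin N → ℝ) (d : Fin N → Fin N → ℝ)
    (lam : ℝ) (Np : Fin N → Finset (Fin N)) (ω : Fin N → ℕ → ℝ) (a : Fin N → ℕ)
    (T : Finset (Fin N)) : ℝ :=
  ∑ i ∈ T, privateUtility N P d lam Np ω a T i

section SpectrumGame

variable {N : ℕ} {P : Fin N → ℝ} {d : Fin N → Fin N → ℝ} {lam : ℝ} {Np : Fin N → Finset (Fin N)}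
  {ω : Fin N → ℕ → ℝ} {a : Fin N → ℕ}

theorem interference_union {S T : Finset (Fin N)} (hST : Disjoint S T) (i : Fin N) :
    interference N P d lam Np a (S ∪ T) i =
      interference N P d lam Np a S i + interference N P d lam Np a T i := by
  unfold interference
  rw [inter_union_distrib_left, sum_union (hST.mono inter_subset_right inter_subset_right)]

theorem interference_mono (hP : ∀ m, 0 ≤ P m) (hd : ∀ m i, 0 ≤ d m i) (i : Fin N) :
    Monotone fun T => interference N P d lam Np a T i := fun _ _ hST =>
  sum_le_sum_of_subset_of_nonneg (inter_subset_inter_left hST) fun m _ _ =>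
    mul_nonneg (mul_nonneg (hP m) (Real.rpow_nonneg (hd m i) _)) (by split_ifs <;> norm_num)

theorem interference_nonneg (hP : ∀ m, 0 ≤ P m) (hd : ∀ m i, 0 ≤ d m i)
    (T : Finset (Fin N)) (i : Fin N) : 0 ≤ interference N P d lam Np a T i := by
  simpa [interference] using
    interference_mono (a := a) (lam := lam) (Np := Np) hP hd i (empty_subset T)

theorem socialUtility_union_singleton_sub {T : Finset (Fin N)} {j : Fin N} (hj : j ∉ T) :
    socialUtility N P d lam Np ω a (T ∪ {j}) - socialUtility N P d lam Np ω a T =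
      privateUtility N P d lam Np ω a (T ∪ {j}) j - ∑ i ∈ T, interference N P d lam Np a {j} i := by
  have hjT : Disjoint T {j} := disjoint_singleton_right.2 hj
  have hjoin : ∀ i ∈ T, privateUtility N P d lam Np ω a (T ∪ {j}) i =
      privateUtility N P d lam Np ω a T i - interference N P d lam Np a {j} i := fun i _ => by
    simp only [privateUtility, interference_union hjT]
    ring
  rw [socialUtility, socialUtility, sum_union hjT, sum_singleton, sum_congr rfl hjoin,
    sum_sub_distrib]
  ring

theorem socialUtility_marginal_antitone (hP : ∀ m, 0 ≤ P m) (hd : ∀ m i, 0 ≤ d m i)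
    {S T : Finset (Fin N)} (hST : S ⊆ T) {j : Fin N} (hj : j ∉ T) :
    socialUtility N P d lam Np ω a (T ∪ {j}) - socialUtility N P d lam Np ω a T ≤
      socialUtility N P d lam Np ω a (S ∪ {j}) - socialUtility N P d lam Np ω a S := by
  rw [socialUtility_union_singleton_sub hj, socialUtility_union_singleton_sub (fun h => hj (hST h))]
  have hsuffered := interference_mono (a := a) (lam := lam) (Np := Np) hP hd j
    (union_subset_union_left hST : S ∪ {j} ⊆ T ∪ {j})
  have hcaused : ∑ i ∈ S, interference N P d lam Np a {j} i ≤
      ∑ i ∈ T, interference N P d lam Np a {j} i :=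
    sum_le_sum_of_subset_of_nonneg hST fun i _ _ => interference_nonneg hP hd {j} i
  simp only [privateUtility]
  linarith

end SpectrumGame

theorem spectrum_social_submodular_general (N : ℕ) (P : Fin N → ℝ) (d : Fin N → Fin N → ℝ)
    (lam : ℝ) (Np : Fin N → Finset (Fin N)) (ω : Fin N → ℕ → ℝ) (a : Fin N → ℕ)
    (hP : ∀ m, 0 < P m) (hd : ∀ m i, 0 < d m i)
    (k l : ℕ) (hkl : k ≤ l) (j : Fin N) (hj : l ≤ (j : ℕ)) :
    socialUtility N P d lam Np ω a
        ((Finset.univ.filter (fun i : Fin N => (i : ℕ) < l)) ∪ {j})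
      - socialUtility N P d lam Np ω a
        (Finset.univ.filter (fun i : Fin N => (i : ℕ) < l))
    ≤ socialUtility N P d lam Np ω a
        ((Finset.univ.filter (fun i : Fin N => (i : ℕ) < k)) ∪ {j})
      - socialUtility N P d lam Np ω a
        (Finset.univ.filter (fun i : Fin N => (i : ℕ) < k)) :=
  socialUtility_marginal_antitone (fun m => (hP m).le) (fun m i => (hd m i).le)
    (monotone_filter_right _ fun i _ (hi : (i : ℕ) < k) => hi.trans_le hkl)
    (by simpa using hj)

/-- Submodularity of the social utility in the spectrum access game, over
sequences of user-channel assignments: for partial assignments to the first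
`k ≤ l` users and any further user `j` (with `l ≤ j`), the marginal decrease
when user `j` joins is larger (the marginal value smaller) for the longer
assignment. -/
theorem spectrum_social_submodular (N : ℕ) (P : Fin N → ℝ) (d : Fin N → Fin N → ℝ)
    (lam : ℝ) (Np : Fin N → Finset (Fin N)) (ω : Fin N → ℕ → ℝ) (a : Fin N → ℕ)
    (hP : ∀ m, 0 < P m) (hd : ∀ m i, 0 < d m i) (hlam : 0 < lam)
    (hω : ∀ i c, 0 ≤ ω i c) (hNp : ∀ i, i ∉ Np i)
    (k l : ℕ) (hkl : k ≤ l) (j : Fin N) (hj : l ≤ (j : ℕ)) :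
    socialUtility N P d lam Np ω a
        ((Finset.univ.filter (fun i : Fin N => (i : ℕ) < l)) ∪ {j})
      - socialUtility N P d lam Np ω a
        (Finset.univ.filter (fun i : Fin N => (i : ℕ) < l))
    ≤ socialUtility N P d lam Np ω a
        ((Finset.univ.filter (fun i : Fin N => (i : ℕ) < k)) ∪ {j})
      - socialUtility N P d lam Np ω a
        (Finset.univ.filter (fun i : Fin N => (i : ℕ) < k)) :=
  spectrum_social_submodular_general N P d lam Np ω a hP hd k l hkl j hj
end
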